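/- Soundness of the loop rule with respect to safety: if safe^k_{ℙ,𝕀}(S, p, p), then safe^k_{{p} ∪ ℙ, 𝕀}(S*, p, p). -/

import Mathlib

/-!
The loop `St*` steps to `skip + (St ; St*)`, so with `p` as the loop invariant it suffices to
run `St` from `p` back to `p` and then restart the loop. Adding `p` to the admissible
predicates makes every `skip` step of this unfolding legal; since `skip` has no global
effect, these steps also record no interference.
-/

open Classical

/-- A separation algebra: a partial commutative monoid with a set of units.
The partial binary operation is modeled as an `Option`-valued function;
`op a b = some c` means the composition is defined and equals `c`. -/
structure SepAlg (α : Type) : Type where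
  op : α → α → Option α
  emp : Set α
  comm : ∀ a b : α, op a b = op b a
  assoc : ∀ a b c : α,
    (op a b).bind (fun x => op x c) = (op b c).bind (fun y => op a y)
  unit_exists : ∀ a : α, ∃ u ∈ emp, op a u = some a
  unit_undef : ∀ u u' : α, u ∈ emp → u' ∈ emp → u ≠ u' → op u u' = none

/-- Separating conjunction of predicates. -/
def SepAlg.sepConj {α : Type} (A : SepAlg α) (p q : Set α) : Set α :=
  { s | ∃ a ∈ p, ∃ b ∈ q, A.op a b = some s }

/-- Separating implication of predicates: `p -* q = { s | {s} * p ⊆ q }`. -/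
def SepAlg.sepImp {α : Type} (A : SepAlg α) (p q : Set α) : Set α :=
  { s | ∀ a ∈ p, ∀ t : α, A.op s a = some t → t ∈ q }

/-- Lifting of a command semantics to predicates (post-image). -/
def postP {β : Type} (f : β → Set β) (p : Set β) : Set β :=
  { t | ∃ s ∈ p, t ∈ f s }

/-- Locality of a command semantics with respect to a separation algebra. -/
def IsLocalCmd {α : Type} (A : SepAlg α) (f : α → Set α) : Prop :=
  ∀ p q o : Set α, postP f p ⊆ q → postP f (A.sepConj p o) ⊆ A.sepConj q o

/-- Weakest precondition. -/
def wpre {α : Type} (f : α → Set α) (q : Set α) : Set α := { s | f s ⊆ q }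

/-- The future predicate `⟨p⟩ c ⟨q⟩ := p -* wp(c)(q)`. -/
def fut {α : Type} (A : SepAlg α) (f : α → Set α) (p q : Set α) : Set α :=
  A.sepImp p (wpre f q)

/-- Statements of the while-language. -/
inductive Stmt (C : Type) : Type where
  | com : C → Stmt C
  | choice : Stmt C → Stmt C → Stmt C
  | seq : Stmt C → Stmt C → Stmt C
  | loop : Stmt C → Stmt C

/-- The control-flow relation `S →^c S'`. -/
inductive CtrlStep {C : Type} (skipc : C) : Stmt C → C → Stmt C → Prop where
  | com (c : C) : CtrlStep skipc (Stmt.com c) c (Stmt.com skipc)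
  | seqSkip (S : Stmt C) : CtrlStep skipc (Stmt.seq (Stmt.com skipc) S) skipc S
  | loopStep (S : Stmt C) :
      CtrlStep skipc (Stmt.loop S) skipc
        (Stmt.choice (Stmt.com skipc) (Stmt.seq S (Stmt.loop S)))
  | choiceL (S₁ S₂ : Stmt C) : CtrlStep skipc (Stmt.choice S₁ S₂) skipc S₁
  | choiceR (S₁ S₂ : Stmt C) : CtrlStep skipc (Stmt.choice S₁ S₂) skipc S₂
  | seqStep {S₁ : Stmt C} {c : C} {S₁' : Stmt C} (S₂ : Stmt C) :
      CtrlStep skipc S₁ c S₁' → CtrlStep skipc (Stmt.seq S₁ S₂) c (Stmt.seq S₁' S₂)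

/-- The state space `Σ`, a subset of the product of global and local states. -/
abbrev PSt {G L : Type} (S : Set (G × L)) : Type := { p : G × L // p ∈ S }

/-- Componentwise composition of states, defined only when both components are
defined and the result again lies in the state space `S`. -/
noncomputable def pOp {G L : Type} (A : SepAlg G) (B : SepAlg L) {S : Set (G × L)}
    (x y : PSt S) : Option (PSt S) :=
  match A.op x.1.1 y.1.1, B.op x.1.2 y.1.2 with
  | some g, some l => if h : (g, l) ∈ S then some ⟨(g, l), h⟩ else none
  | _, _ => none

/-- Separating conjunction of state predicates over the product state space. -/
noncomputable def pSep {G L : Type} (A : SepAlg G) (B : SepAlg L) {S : Set (G × L)}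
    (p q : Set (PSt S)) : Set (PSt S) :=
  { s | ∃ a ∈ p, ∃ b ∈ q, pOp A B a b = some s }

/-- Locality of a command semantics. -/
noncomputable def LocalSem {G L C : Type} (A : SepAlg G) (B : SepAlg L) {S : Set (G × L)}
    (sem : C → PSt S → Set (PSt S)) : Prop :=
  ∀ (c : C) (p q o : Set (PSt S)),
    postP (sem c) p ⊆ q → postP (sem c) (pSep A B p o) ⊆ pSep A B q o

/-- An interference `(o, c)` is effectful if it may change the global state. -/
def Effectful {G L C : Type} {S : Set (G × L)} (sem : C → PSt S → Set (PSt S))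
    (o : Set (PSt S)) (c : C) : Prop :=
  ∃ s ∈ o, ∃ t ∈ sem c s, t.1.1 ≠ s.1.1

/-- `inter(o, c)`: the recorded interference set of a command. -/
def interOf {G L C : Type} {S : Set (G × L)} (sem : C → PSt S → Set (PSt S))
    (o : Set (PSt S)) (c : C) : Set (Set (PSt S) × C) :=
  { x | Effectful sem o c ∧ x = (o, c) }

/-- `inter(o, c) ⊑ 𝕀`: either there is no interference to capture, or it is
covered by an interference in `𝕀`. -/
def InterCovered {G L C : Type} {S : Set (G × L)} (sem : C → PSt S → Set (PSt S))
    (o : Set (PSt S)) (c : C) (I : Set (Set (PSt S) × C)) : Prop :=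
  ¬ Effectful sem o c ∨ ∃ r : Set (PSt S), (r, c) ∈ I ∧ o ⊆ r

/-- Thread-local safety, by recursion on the step bound `k`. -/
def safe {G L C : Type} {S : Set (G × L)} (sem : C → PSt S → Set (PSt S)) (skipc : C)
    (P : Set (Set (PSt S))) (I : Set (Set (PSt S) × C)) :
    ℕ → Stmt C → Set (PSt S) → Set (PSt S) → Prop
  | 0, _, _, _ => True
  | k + 1, St, r, q =>
      (St = Stmt.com skipc → r ⊆ q) ∧
      ∀ (c : C) (S' : Stmt C), CtrlStep skipc St c S' →
        InterCovered sem r c I ∧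
        ∃ n ∈ P, postP (sem c) r ⊆ n ∧ safe sem skipc P I k S' n q

section Safety

variable {G L C : Type} {S : Set (G × L)} {sem : C → PSt S → Set (PSt S)} {skipc : C}
  {P P' : Set (Set (PSt S))} {I : Set (Set (PSt S) × C)}

theorem safe_of_le {k m : ℕ} (hmk : m ≤ k) {St : Stmt C} {r q : Set (PSt S)}
    (h : safe sem skipc P I k St r q) : safe sem skipc P I m St r q := by
  induction k generalizing m St r with
  | zero => cases Nat.le_zero.mp hmk; trivial
  | succ k ih =>
    cases m with
    | zero => trivial
    | succ m =>
      refine ⟨h.1, fun c S' hstep => ?_⟩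
      obtain ⟨hcov, n, hn, hpost, hsafe⟩ := h.2 c S' hstep
      exact ⟨hcov, n, hn, hpost, ih (Nat.le_of_succ_le_succ hmk) hsafe⟩

theorem safe_mono_preds (hPP' : P ⊆ P') {k : ℕ} {St : Stmt C} {r q : Set (PSt S)}
    (h : safe sem skipc P I k St r q) : safe sem skipc P' I k St r q := by
  induction k generalizing St r with
  | zero => trivial
  | succ k ih =>
    refine ⟨h.1, fun c S' hstep => ?_⟩
    obtain ⟨hcov, n, hn, hpost, hsafe⟩ := h.2 c S' hstep
    exact ⟨hcov, n, hPP' hn, hpost, ih hsafe⟩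

variable (hskip : ∀ s : PSt S, sem skipc s = {s})
include hskip

theorem postP_skip (r : Set (PSt S)) : postP (sem skipc) r = r := by
  ext t
  simp [postP, hskip]

theorem not_effectful_skip (r : Set (PSt S)) : ¬ Effectful sem r skipc := by
  rintro ⟨s, -, t, ht, hne⟩
  rw [hskip, Set.mem_singleton_iff] at ht
  exact hne (by rw [ht])

theorem skip_step_safe {k : ℕ} {S' : Stmt C} {r n q : Set (PSt S)} (hn : n ∈ P)
    (hrn : r ⊆ n) (h : safe sem skipc P I k S' n q) :
    InterCovered sem r skipc I ∧
      ∃ n ∈ P, postP (sem skipc) r ⊆ n ∧ safe sem skipc P I k S' n q :=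
  ⟨Or.inl (not_effectful_skip hskip r), n, hn, by rwa [postP_skip hskip], h⟩

theorem safe_skip {p : Set (PSt S)} (hp : p ∈ P) (k : ℕ) :
    safe sem skipc P I k (Stmt.com skipc) p p := by
  induction k with
  | zero => trivial
  | succ k ih =>
    refine ⟨fun _ => subset_rfl, fun c S' hstep => ?_⟩
    cases hstep
    exact skip_step_safe hskip hp subset_rfl ih

theorem safe_seq {p : Set (PSt S)} (hp : p ∈ P) {k : ℕ} {S₁ S₂ : Stmt C} {r q : Set (PSt S)}
    (h₁ : safe sem skipc P I k S₁ r p) (h₂ : safe sem skipc P I k S₂ p q) :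
    safe sem skipc P I k (Stmt.seq S₁ S₂) r q := by
  induction k generalizing S₁ r with
  | zero => trivial
  | succ k ih =>
    refine ⟨nofun, fun c S' hstep => ?_⟩
    cases hstep with
    | seqSkip => exact skip_step_safe hskip hp (h₁.1 rfl) (safe_of_le k.le_succ h₂)
    | seqStep _ hstep₁ =>
      obtain ⟨hcov, n, hn, hpost, hsafe⟩ := h₁.2 _ _ hstep₁
      exact ⟨hcov, n, hn, hpost, ih hsafe (safe_of_le k.le_succ h₂)⟩

theorem safe_loop {p : Set (PSt S)} (hp : p ∈ P) {k : ℕ} {St : Stmt C}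
    (h : safe sem skipc P I k St p p) : safe sem skipc P I k (Stmt.loop St) p p := by
  induction k with
  | zero => trivial
  | succ k ih =>
    refine ⟨nofun, fun c S' hstep => ?_⟩
    cases hstep
    refine skip_step_safe hskip hp subset_rfl ?_
    cases k with
    | zero => trivial
    | succ m =>
      have hloop : safe sem skipc P I m (Stmt.loop St) p p :=
        safe_of_le m.le_succ (ih (safe_of_le (m + 1).le_succ h))
      refine ⟨nofun, fun c S' hstep => ?_⟩
      cases hstep with
      | choiceL => exact skip_step_safe hskip hp subset_rfl (safe_skip hskip hp m)
      | choiceR =>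
        exact skip_step_safe hskip hp subset_rfl
          (safe_seq hskip hp (safe_of_le (by omega) h) hloop)

end Safety

/-- soundness of the loop rule with respect to safety. -/
theorem stmt16 {G L C : Type} {S : Set (G × L)} (sem : C → PSt S → Set (PSt S))
    (skipc : C) (hskip : ∀ s : PSt S, sem skipc s = {s})
    (P : Set (Set (PSt S))) (I : Set (Set (PSt S) × C))
    (k : ℕ) (St : Stmt C) (p : Set (PSt S))
    (h : safe sem skipc P I k St p p) :
    safe sem skipc ({p} ∪ P) I k (Stmt.loop St) p p :=
  safe_loop hskip (Set.mem_union_left P (Set.mem_singleton p))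
    (safe_mono_preds Set.subset_union_right h)
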